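/- arXiv:2204.05475 — 3 statements merged into one kernel-verified Lean document; each statement's English description precedes it below -/
import Mathlib

section
/- Let G be an infinite graph with maximum degree at most Δ (Δ finite) satisfying the expansion property with polynomial bound L: every finite subset of vertices with at most B escaping edges has cardinality at most L(B). Then for any finite set V' of vertices, the induced subgraph G[V \ V'] satisfies the expansion property with bound L'(B) = L(B + Δ·|V'|): every finite subset W of V \ V' with at most B escaping edges in G[V \ V'] has |W| ≤ L(B + Δ·|V'|). -/
/-- The escaping edges from a vertex set `W` in a graph `G`, recorded as ordered pairs
`(a, b)` with `a ∈ W`, `a` adjacent to `b`, and `b` lying in an infinite connected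
component of the subgraph induced on the complement of `W`. -/
def escaping {V : Type*} (G : SimpleGraph V) (W : Set V) : Set (V × V) :=
  {p | p.1 ∈ W ∧ G.Adj p.1 p.2 ∧ ∃ h : p.2 ∈ Wᶜ,
    {c : ↥(Wᶜ) | (G.induce Wᶜ).Reachable ⟨p.2, h⟩ c}.Infinite}

/-- The expansion property with bound `L`: every finite vertex set with at most `B`
escaping edges has cardinality at most `L B`. -/
def ExpansionProp {V : Type*} (G : SimpleGraph V) (L : ℕ → ℕ) : Prop :=
  ∀ (B : ℕ) (W : Set V), W.Finite → (escaping G W).encard ≤ B → W.ncard ≤ L B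

/-! Apply the expansion property of `G` to `W ∪ V'`. An escaping edge of `W ∪ V'` either starts
in `V'`, and there are at most `Δ * |V'|` of those, or it starts in `W` and ends outside `V'`;
then it also escapes `W` in `G[V \ V']`, because the complement of `W ∪ V'` in `G` embeds into the
complement of `W` in `G[V \ V']`. -/

open Set

namespace SimpleGraph

variable {V : Type*} {G : SimpleGraph V}

lemma encard_setOf_adj_fst_mem_le {Δ : ℕ} {s : Set V} (hs : s.Finite)
    (hΔ : ∀ v ∈ s, (G.neighborSet v).encard ≤ Δ) :
    {p : V × V | p.1 ∈ s ∧ G.Adj p.1 p.2}.encard ≤ Δ * s.ncard := by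
  lift s to Finset V using hs
  have hunion : {p : V × V | p.1 ∈ s ∧ G.Adj p.1 p.2} =
      ⋃ a ∈ s, Prod.mk a '' G.neighborSet a := by
    ext ⟨a, b⟩
    simp [and_comm]
  calc _ ≤ ∑ a ∈ s, (Prod.mk a '' G.neighborSet a).encard := hunion ▸ s.set_encard_biUnion_le _
    _ ≤ ∑ _ ∈ s, (Δ : ℕ∞) := Finset.sum_le_sum fun a ha => (encard_image_le _ _).trans (hΔ a ha)
    _ = Δ * (s : Set V).ncard := by simp [mul_comm]

lemma infinite_setOf_reachable_of_embedding {W : Type*} {G' : SimpleGraph W} (f : G ↪g G') {x : V}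
    (h : {c | G.Reachable x c}.Infinite) : {c | G'.Reachable (f x) c}.Infinite :=
  (h.image f.injective.injOn).mono <| by
    rintro _ ⟨c, hc, rfl⟩
    exact hc.map f.toHom

def embeddingInduceCompl (V' : Set V) (W : Set ↥(V'ᶜ)) :
    G.induce (Subtype.val '' W ∪ V')ᶜ ↪g (G.induce V'ᶜ).induce Wᶜ where
  toFun x := ⟨⟨x, fun h => x.2 (Or.inr h)⟩, fun h => x.2 (Or.inl ⟨_, h, rfl⟩)⟩
  inj' _ _ h := Subtype.ext (congrArg (fun z : ↥(Wᶜ : Set ↥(V'ᶜ)) => (z : V)) h)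
  map_rel_iff' := Iff.rfl

lemma escaping_image_union_subset (V' : Set V) (W : Set ↥(V'ᶜ)) :
    escaping G (Subtype.val '' W ∪ V') ⊆
      Prod.map Subtype.val Subtype.val '' escaping (G.induce V'ᶜ) W ∪
        {p | p.1 ∈ V' ∧ G.Adj p.1 p.2} := by
  rintro ⟨a, b⟩ ⟨ha, hadj, hb, hinf⟩
  rcases ha with ⟨a, haW, rfl⟩ | haV'
  · have hbV' : b ∈ V'ᶜ := fun h => hb (Or.inr h)
    refine Or.inl ⟨(a, ⟨b, hbV'⟩), ⟨haW, hadj, fun h => hb (Or.inl ⟨_, h, rfl⟩), ?_⟩, rfl⟩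
    exact infinite_setOf_reachable_of_embedding (embeddingInduceCompl V' W) hinf
  · exact Or.inr ⟨haV', hadj⟩

lemma encard_escaping_image_union_le {Δ : ℕ} {V' : Set V} (hV' : V'.Finite)
    (hΔ : ∀ v ∈ V', (G.neighborSet v).encard ≤ Δ) (W : Set ↥(V'ᶜ)) :
    (escaping G (Subtype.val '' W ∪ V')).encard ≤
      (escaping (G.induce V'ᶜ) W).encard + Δ * V'.ncard :=
  calc _ ≤ _ := encard_le_encard (escaping_image_union_subset V' W)
    _ ≤ _ := encard_union_le _ _
    _ ≤ _ := add_le_add (encard_image_le _ _) (encard_setOf_adj_fst_mem_le hV' hΔ)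

end SimpleGraph

theorem expansion_of_removeVertices_general {V : Type*} (G : SimpleGraph V)
    (Δ : ℕ) (hΔ : ∀ v : V, (G.neighborSet v).encard ≤ Δ)
    (L : ℕ → ℕ) (hL : ExpansionProp G L)
    (V' : Set V) (hV' : V'.Finite)
    (B : ℕ) (W : Set ↥(V'ᶜ)) (hW : W.Finite)
    (hesc : (escaping (G.induce V'ᶜ) W).encard ≤ B) :
    W.ncard ≤ L (B + Δ * V'.ncard) := by
  have hW' : (Subtype.val '' W ∪ V').Finite := (hW.image _).union hV'
  have hescW' : (escaping G (Subtype.val '' W ∪ V')).encard ≤ ↑(B + Δ * V'.ncard) := by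
    push_cast
    exact (SimpleGraph.encard_escaping_image_union_le hV' (fun v _ => hΔ v) W).trans
      (add_le_add_left hesc _)
  calc W.ncard = (Subtype.val '' W).ncard :=
        (ncard_image_of_injective W Subtype.val_injective).symm
    _ ≤ (Subtype.val '' W ∪ V').ncard := ncard_le_ncard subset_union_left hW'
    _ ≤ L (B + Δ * V'.ncard) := hL _ _ hW' hescW'

/-- If an infinite graph `G` with maximum degree at most `Δ` satisfies the expansion
property with bound `L`, then for any finite vertex set `V'`, the induced subgraph on the
complement of `V'` satisfies the expansion property with bound `B ↦ L (B + Δ * |V'|)`. -/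
theorem expansion_of_removeVertices {V : Type*} (G : SimpleGraph V) (hinf : Infinite V)
    (Δ : ℕ) (hΔ : ∀ v : V, (G.neighborSet v).encard ≤ Δ)
    (L : ℕ → ℕ) (hL : ExpansionProp G L)
    (V' : Set V) (hV' : V'.Finite)
    (B : ℕ) (W : Set ↥(V'ᶜ)) (hW : W.Finite)
    (hesc : (escaping (G.induce V'ᶜ) W).encard ≤ B) :
    W.ncard ≤ L (B + Δ * V'.ncard) :=
  expansion_of_removeVertices_general G Δ hΔ L hL V' hV' B W hW hesc
end

section
/- Every finite subgraph of the infinite grid with p vertices (p ≥ 1) has at least 2·⌈2·√p⌉ escaping edges, i.e., at least 2·⌈2·√p⌉ edges of the grid join the subgraph's vertex set to its complement. -/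
/-- The infinite grid graph on ℤ × ℤ: two points are adjacent iff their ℓ¹-distance is 1. -/
def grid : SimpleGraph (ℤ × ℤ) where
  Adj p q := (p.1 - q.1).natAbs + (p.2 - q.2).natAbs = 1
  symm := by
    constructor
    intro p q h
    try simp only at h ⊢
    omega
  loopless := by
    constructor
    intro p h
    simp at h

/-- The edge boundary of a vertex set `W` in a graph `G`: ordered pairs `(a, b)` with
`a ∈ W`, `b ∉ W` and `a` adjacent to `b` (in one-to-one correspondence with boundary
edges). -/
def edgeBoundary {V : Type*} (G : SimpleGraph V) (W : Set V) : Set (V × V) :=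
  {p | p.1 ∈ W ∧ p.2 ∉ W ∧ G.Adj p.1 p.2}

/-! If `W` meets `a` columns and `b` rows of the grid, then the topmost and bottommost cell of
every occupied column and the leftmost and rightmost cell of every occupied row each have an
escaping edge in their direction, so at least `2 (a + b)` edges escape. On the other hand
`W ⊆ columns × rows` gives `p ≤ a b`, and AM–GM turns this into `a + b ≥ 2 √p`. -/

open Finset

theorem Nat.ceil_two_mul_sqrt_le_add {p a b : ℕ} (h : p ≤ a * b) :
    ⌈2 * √(p : ℝ)⌉₊ ≤ a + b := by
  have hsq : (4 * p : ℝ) ≤ ((a + b : ℕ) : ℝ) ^ 2 := by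
    have h' : (p : ℝ) ≤ a * b := by exact_mod_cast h
    push_cast
    nlinarith [four_mul_le_sq_add (a : ℝ) b]
  rw [Nat.ceil_le]
  nlinarith [Real.sq_sqrt p.cast_nonneg, Real.sqrt_nonneg p, Nat.cast_nonneg (α := ℝ) (a + b)]

section Translation

variable {G : Type*} [AddGroup G]

theorem Set.Finite.exists_add_notMem [IsAddTorsionFree G] {S : Set G} (hS : S.Finite)
    (hne : S.Nonempty) {d : G} (hd : d ≠ 0) : ∃ b ∈ S, b + d ∉ S := by
  by_contra! hclosed
  obtain ⟨a, ha⟩ := hne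
  have hmem : ∀ n : ℕ, a + n • d ∈ S := by
    intro n
    induction n with
    | zero => simpa
    | succ n ih => simpa [succ_nsmul, add_assoc] using hclosed _ ih
  have hinj : Function.Injective fun n : ℕ => a + n • d :=
    (add_right_injective a).comp
      (injective_nsmul_iff_not_isOfFinAddOrder.2 (not_isOfFinAddOrder_of_isAddTorsionFree hd))
  exact Set.infinite_of_injective_forall_mem hinj hmem hS

theorem Finset.card_image_le_card_filter_add_notMem [IsAddTorsionFree G] [DecidableEq G]
    {ι : Type*} [DecidableEq ι] (s : Finset G) {d : G} (hd : d ≠ 0) (f : G → ι)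
    (hf : ∀ a, f (a + d) = f a) : #(s.image f) ≤ #(s.filter fun a => a + d ∉ s) := by
  refine card_le_card_of_surjOn f ?_
  intro i hi
  obtain ⟨a, ha, rfl⟩ := mem_image.1 hi
  obtain ⟨b, ⟨hb, hfb⟩, hbd⟩ :=
    (s.finite_toSet.inter_of_left {x | f x = f a}).exists_add_notMem ⟨a, ha, rfl⟩ hd
  exact ⟨b, mem_filter.2 ⟨hb, fun h => hbd ⟨h, (hf b).trans hfb⟩⟩, hfb⟩

theorem sum_card_filter_add_notMem_le_encard_edgeBoundary [DecidableEq G] (Γ : SimpleGraph G)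
    (D : Finset G) (hD : ∀ a, ∀ d ∈ D, Γ.Adj a (a + d)) (s : Finset G) :
    ((∑ d ∈ D, #(s.filter fun a => a + d ∉ s) : ℕ) : ℕ∞) ≤ (edgeBoundary Γ s).encard := by
  set E := D.biUnion fun d => (s.filter fun a => a + d ∉ s).image fun a => (a, a + d)
  have hdisj : (D : Set G).PairwiseDisjoint
      fun d => (s.filter fun a => a + d ∉ s).image fun a => (a, a + d) := by
    intro d _ d' _ hne
    rw [Function.onFun, disjoint_left]
    simp only [mem_image, mem_filter, not_exists, not_and]
    rintro _ ⟨a, -, rfl⟩ a' - h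
    obtain ⟨rfl, h⟩ := Prod.mk.inj h
    exact hne (add_left_cancel h).symm
  have hcard : #E = ∑ d ∈ D, #(s.filter fun a => a + d ∉ s) := by
    rw [card_biUnion hdisj]
    exact sum_congr rfl fun d _ => card_image_of_injective _ fun a b h => (Prod.ext_iff.1 h).1
  have hsub : (E : Set (G × G)) ⊆ edgeBoundary Γ s := by
    intro e he
    simp only [E, coe_biUnion, coe_image, coe_filter, Set.mem_iUnion, Set.mem_image] at he
    obtain ⟨d, hd, a, ⟨ha, had⟩, rfl⟩ := he
    exact ⟨ha, had, hD a d hd⟩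
  rw [← hcard, ← Set.encard_coe_eq_coe_finsetCard]
  exact Set.encard_le_encard hsub

end Translation

def gridUnitVectors : Finset (ℤ × ℤ) := {(1, 0), (-1, 0), (0, 1), (0, -1)}

theorem grid_adj_add_of_mem_gridUnitVectors (a : ℤ × ℤ) :
    ∀ d ∈ gridUnitVectors, grid.Adj a (a + d) := by
  simp [gridUnitVectors, grid]

theorem two_mul_card_add_card_le_encard_edgeBoundary_grid (s : Finset (ℤ × ℤ)) :
    ((2 * (#(s.image Prod.fst) + #(s.image Prod.snd)) : ℕ) : ℕ∞) ≤
      (edgeBoundary grid s).encard := by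
  refine le_trans ?_ (sum_card_filter_add_notMem_le_encard_edgeBoundary grid gridUnitVectors
    grid_adj_add_of_mem_gridUnitVectors s)
  have hrow (d : ℤ) (hd : d ≠ 0) := s.card_image_le_card_filter_add_notMem
    (d := (d, 0)) (by simpa) Prod.snd fun _ => by simp
  have hcol (d : ℤ) (hd : d ≠ 0) := s.card_image_le_card_filter_add_notMem
    (d := (0, d)) (by simpa) Prod.fst fun _ => by simp
  norm_cast
  simp only [gridUnitVectors]
  rw [sum_insert (by decide), sum_insert (by decide), sum_insert (by decide), sum_singleton]
  linarith [hrow 1 one_ne_zero, hrow (-1) (by decide), hcol 1 one_ne_zero, hcol (-1) (by decide)]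

theorem grid_isoperimetric_general (W : Set (ℤ × ℤ)) (hW : W.Finite) :
    ((2 * ⌈2 * Real.sqrt (W.ncard : ℝ)⌉₊ : ℕ) : ℕ∞) ≤ (edgeBoundary grid W).encard := by
  lift W to Finset (ℤ × ℤ) using hW with s
  rw [Set.ncard_coe_finset]
  have hcard : #s ≤ #(s.image Prod.fst) * #(s.image Prod.snd) :=
    (card_le_card subset_product).trans_eq (card_product _ _)
  calc ((2 * ⌈2 * √(#s : ℝ)⌉₊ : ℕ) : ℕ∞)
      ≤ ((2 * (#(s.image Prod.fst) + #(s.image Prod.snd)) : ℕ) : ℕ∞) := by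
        gcongr
        exact Nat.ceil_two_mul_sqrt_le_add hcard
    _ ≤ (edgeBoundary grid s).encard := two_mul_card_add_card_le_encard_edgeBoundary_grid s

/-- Harary–Harborth isoperimetric inequality: any finite nonempty set of `p` vertices of
the infinite grid has at least `2 * ⌈2 * √p⌉` boundary (escaping) edges. -/
theorem grid_isoperimetric (W : Set (ℤ × ℤ)) (hW : W.Finite) (hne : W.Nonempty) :
    ((2 * ⌈2 * Real.sqrt (W.ncard : ℝ)⌉₊ : ℕ) : ℕ∞) ≤ (edgeBoundary grid W).encard :=
  grid_isoperimetric_general W hW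
end

section
/- Let G = (V,E) be a connected graph in which every ray contains a vertex of infinite degree, let Ṽ be a finite set of vertices, and let H be a finite set of edges such that in G − H no vertex of Ṽ is connected by a path to any vertex of infinite degree. Then every connected component of G − H meeting Ṽ is finite. -/
/-!
Suppose the component of some `v ∈ Vt` in `G − H` were infinite. All its vertices have finite
degree, so by Kőnig's lemma it contains a ray starting at `v`: repeatedly step to a neighbour one
unit further from `v` that still lies on shortest paths from `v` to infinitely many vertices. This
ray is also a ray of `G`, hence passes through a vertex of infinite degree, which is then
reachable from `v` in `G − H`.
-/

/-- A ray in a graph: an injective sequence of vertices with consecutive vertices adjacent. -/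
def IsRay {V : Type*} (G : SimpleGraph V) (x : ℕ → V) : Prop :=
  Function.Injective x ∧ ∀ i : ℕ, G.Adj (x i) (x (i + 1))

theorem exists_seq_rel_succ_of_forall_exists {α : Type*} {P : α → Prop} {r : α → α → Prop}
    {a : α} (ha : P a) (h : ∀ x, P x → ∃ y, P y ∧ r x y) :
    ∃ f : ℕ → α, f 0 = a ∧ ∀ n, r (f n) (f (n + 1)) := by
  choose g hg using h
  let f : ℕ → {x // P x} := Nat.rec ⟨a, ha⟩ fun _ x ↦ ⟨g x x.2, (hg x x.2).1⟩
  exact ⟨(f · |>.1), rfl, fun n ↦ (hg _ (f n).2).2⟩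

theorem IsRay.mono {V : Type*} {G G' : SimpleGraph V} (hle : G ≤ G') {x : ℕ → V}
    (hx : IsRay G x) : IsRay G' x :=
  ⟨hx.1, fun i ↦ hle (hx.2 i)⟩

namespace SimpleGraph

variable {V : Type*} {G : SimpleGraph V}

theorem reachable_of_forall_adj_succ {x : ℕ → V} (hx : ∀ i, G.Adj (x i) (x (i + 1))) (n : ℕ) :
    G.Reachable (x 0) (x n) := by
  induction n with
  | zero => rfl
  | succ n ih => exact ih.trans (hx n).reachable

/-- The vertices `y` such that some shortest walk from `v` to `y` passes through `u`. -/
def geodesicCone (G : SimpleGraph V) (v u : V) : Set V :=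
  {y | G.Reachable u y ∧ G.dist v y = G.dist v u + G.dist u y}

theorem geodesicCone_self (v : V) : G.geodesicCone v v = {y | G.Reachable v y} := by
  simp [geodesicCone]

theorem exists_adj_mem_geodesicCone {v u y : V} (hy : y ∈ G.geodesicCone v u) (hne : u ≠ y) :
    ∃ w, G.Adj u w ∧ G.dist v w = G.dist v u + 1 ∧ y ∈ G.geodesicCone v w := by
  obtain ⟨hreach, hdist⟩ := hy
  obtain ⟨p, hp⟩ := hreach.exists_walk_length_eq_dist
  cases p with
  | nil => exact absurd rfl hne
  | @cons _ w _ hadj q =>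
    -- `w` is the first step of a shortest walk from `u` to `y`; both triangle inequalities
    -- through `w` are then tight.
    have hvw : G.dist v w ≤ G.dist v u + 1 := by
      simpa [dist_eq_one_iff_adj.mpr hadj] using hadj.reachable.dist_triangle_right v
    have hwy : G.dist w y ≤ q.length := dist_le q
    have hvy : G.dist v y ≤ G.dist v w + G.dist w y := q.reachable.dist_triangle_right v
    simp only [Walk.length_cons] at hp
    exact ⟨w, hadj, by omega, q.reachable, by omega⟩

theorem exists_adj_geodesicCone_infinite {v u : V} (hfin : (G.neighborSet u).Finite)
    (hinf : (G.geodesicCone v u).Infinite) :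
    ∃ w, G.Adj u w ∧ G.dist v w = G.dist v u + 1 ∧ (G.geodesicCone v w).Infinite := by
  by_contra! hcones
  have hcover : G.geodesicCone v u ⊆
      insert u (⋃ w ∈ G.neighborSet u ∩ {w | G.dist v w = G.dist v u + 1}, G.geodesicCone v w) := by
    intro y hy
    by_cases hyu : u = y
    · exact Or.inl hyu.symm
    obtain ⟨w, hadj, hw, hyw⟩ := exists_adj_mem_geodesicCone hy hyu
    exact Or.inr (Set.mem_biUnion ⟨hadj, hw⟩ hyw)
  refine hinf (Set.Finite.subset (Set.Finite.insert u ?_) hcover)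
  exact (hfin.inter_of_left _).biUnion fun w ⟨hadj, hw⟩ ↦ hcones w hadj hw

/-- Kőnig's infinity lemma. -/
theorem exists_isRay_of_infinite_reachable {v : V}
    (hfin : ∀ u, G.Reachable v u → (G.neighborSet u).Finite)
    (hinf : {u | G.Reachable v u}.Infinite) :
    ∃ x : ℕ → V, x 0 = v ∧ IsRay G x := by
  obtain ⟨x, hx0, hx⟩ := exists_seq_rel_succ_of_forall_exists
    (P := fun u ↦ G.Reachable v u ∧ (G.geodesicCone v u).Infinite)
    (r := fun u w ↦ G.Adj u w ∧ G.dist v w = G.dist v u + 1)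
    ⟨Reachable.refl v, geodesicCone_self (G := G) v ▸ hinf⟩
    fun u ⟨hu, hcone⟩ ↦
      let ⟨w, hadj, hw, hwcone⟩ := exists_adj_geodesicCone_infinite (hfin u hu) hcone
      ⟨w, ⟨hu.trans hadj.reachable, hwcone⟩, hadj, hw⟩
  have hdist : ∀ n, G.dist v (x n) = n := by
    intro n
    induction n with
    | zero => simp [hx0]
    | succ n ih => rw [(hx n).2, ih]
  refine ⟨x, hx0, fun m n hmn ↦ ?_, fun n ↦ (hx n).1⟩
  rw [← hdist m, ← hdist n, hmn]

end SimpleGraph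

theorem component_finite_of_ray_infiniteDegree_general {V : Type*} (G : SimpleGraph V)
    (hray : ∀ x : ℕ → V, IsRay G x → ∃ i : ℕ, (G.neighborSet (x i)).Infinite)
    (Vt : Set V) (H : Set (Sym2 V))
    (hsep : ∀ v ∈ Vt, ∀ y : V, (G.deleteEdges H).Reachable v y →
      ¬ (G.neighborSet y).Infinite) :
    ∀ v ∈ Vt, {y : V | (G.deleteEdges H).Reachable v y}.Finite := by
  intro v hv
  by_contra hinf
  have hfin (u : V) (hu : (G.deleteEdges H).Reachable v u) :
      ((G.deleteEdges H).neighborSet u).Finite :=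
    (Set.not_infinite.mp (hsep v hv u hu)).subset (SimpleGraph.neighborSet_mono (G.deleteEdges_le H) u)
  obtain ⟨x, rfl, hx⟩ := SimpleGraph.exists_isRay_of_infinite_reachable hfin hinf
  obtain ⟨i, hi⟩ := hray x (hx.mono (G.deleteEdges_le H))
  exact hsep (x 0) hv (x i) (SimpleGraph.reachable_of_forall_adj_succ hx.2 i) hi

/-- Let `G` be a connected graph in which every ray contains a vertex of infinite degree,
`Vt` a finite vertex set, and `H` a finite set of edges such that in `G − H` no vertex of
`Vt` is connected by a path to any vertex of infinite degree. Then every connected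
component of `G − H` meeting `Vt` is finite. -/
theorem component_finite_of_ray_infiniteDegree {V : Type*} (G : SimpleGraph V)
    (hconn : G.Connected)
    (hray : ∀ x : ℕ → V, IsRay G x → ∃ i : ℕ, (G.neighborSet (x i)).Infinite)
    (Vt : Set V) (hVt : Vt.Finite) (H : Set (Sym2 V)) (hH : H.Finite)
    (hsep : ∀ v ∈ Vt, ∀ y : V, (G.deleteEdges H).Reachable v y →
      ¬ (G.neighborSet y).Infinite) :
    ∀ v ∈ Vt, {y : V | (G.deleteEdges H).Reachable v y}.Finite :=
  component_finite_of_ray_infiniteDegree_general G hray Vt H hsep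
end
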